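/- arXiv:1509.04780 — 4 statements merged into one kernel-verified Lean document; each statement's English description precedes it below -/
import Mathlib

section
/- For integers N ≥ 2, k ≥ 2, and spin configurations σ^1, ..., σ^k ∈ {-1,1}^N, the following identity holds: ∑_{1≤i<j≤N} (σ^1_i σ^1_j + ⋯ + σ^k_i σ^k_j)^2 = kN²/2 − Nk²/2 + ∑_{1≤u<v≤k} (σ^u_1 σ^v_1 + ⋯ + σ^u_N σ^v_N)^2. -/
/-!
Let `G = Σᵀ Σ` and `H = Σ Σᵀ` be the Gram matrices of the columns and of the rows of the `k × N`
spin matrix `Σ`. Both `∑ G_ij²` and `∑ H_uv²` equal `tr (Σ Σᵀ Σ Σᵀ)`. Since `σ_ui² = 1`, the diagonal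
entries are `G_ii = k` and `H_uu = N`, and by symmetry each full sum is its diagonal plus twice its
strictly upper triangular part; comparing the two gives the identity.
-/

open Finset

section

variable {ι R : Type*} [Fintype ι] [LinearOrder ι] [LocallyFiniteOrderTop ι]
  [LocallyFiniteOrderBot ι]

theorem Finset.sum_Iio_add_sum_Ici [AddCommMonoid R] (f : ι → R) (i : ι) :
    ∑ j ∈ Iio i, f j + ∑ j ∈ Ici i, f j = ∑ j, f j := by
  rw [← sum_filter_add_sum_filter_not univ (· < i), filter_gt_eq_Iio]
  simp only [not_lt, filter_le_eq_Ici]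

theorem sum_sum_eq_sum_diag_add_two_mul_sum_Ioi [NonAssocSemiring R] (g : ι → ι → R)
    (hg : ∀ i j, g i j = g j i) :
    ∑ i, ∑ j, g i j = ∑ i, g i i + 2 * ∑ i, ∑ j ∈ Ioi i, g i j := by
  have hswap : ∑ i, ∑ j ∈ Iio i, g i j = ∑ i, ∑ j ∈ Ioi i, g i j :=
    (sum_comm' fun _ _ => by simp [and_comm]).trans
      (sum_congr rfl fun _ _ => sum_congr rfl fun _ _ => hg _ _)
  have hsplit (i : ι) := (sum_Iio_add_sum_Ici (g i) i).symm
  simp only [hsplit, Ici_eq_cons_Ioi, sum_cons, sum_add_distrib, hswap]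
  rw [two_mul]
  abel

end

theorem sum_sum_sq_sum_mul_comm {ι κ R : Type*} [Fintype ι] [Fintype κ] [CommSemiring R]
    (x : κ → ι → R) :
    ∑ i, ∑ j, (∑ u, x u i * x u j) ^ 2 = ∑ u, ∑ v, (∑ i, x u i * x v i) ^ 2 := by
  simp only [sq, sum_mul_sum, sum_comm (γ := ι) (α := κ), mul_mul_mul_comm (x _ _)]

theorem stmt0_general (N k : ℕ)
    (σ : Fin k → Fin N → ℝ) (hσ : ∀ u i, σ u i = 1 ∨ σ u i = -1) :
    ∑ i : Fin N, ∑ j ∈ Finset.Ioi i, (∑ u : Fin k, σ u i * σ u j) ^ 2 =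
      (k : ℝ) * (N : ℝ) ^ 2 / 2 - (N : ℝ) * (k : ℝ) ^ 2 / 2 +
        ∑ u : Fin k, ∑ v ∈ Finset.Ioi u, (∑ i : Fin N, σ u i * σ v i) ^ 2 := by
  have hsq (u i) : σ u i * σ u i = 1 := by
    rcases hσ u i with h | h <;> simp [h]
  have h := sum_sum_sq_sum_mul_comm σ
  rw [sum_sum_eq_sum_diag_add_two_mul_sum_Ioi _ fun i j => by simp only [mul_comm (σ _ i)],
    sum_sum_eq_sum_diag_add_two_mul_sum_Ioi _ fun u v => by simp only [mul_comm (σ u _)]] at h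
  simp only [hsq, sum_const, card_univ, Fintype.card_fin, nsmul_eq_mul, mul_one] at h
  linarith

theorem stmt0 (N k : ℕ) (hN : 2 ≤ N) (hk : 2 ≤ k)
    (σ : Fin k → Fin N → ℝ) (hσ : ∀ u i, σ u i = 1 ∨ σ u i = -1) :
    ∑ i : Fin N, ∑ j ∈ Finset.Ioi i, (∑ u : Fin k, σ u i * σ u j) ^ 2 =
      (k : ℝ) * (N : ℝ) ^ 2 / 2 - (N : ℝ) * (k : ℝ) ^ 2 / 2 +
        ∑ u : Fin k, ∑ v ∈ Finset.Ioi u, (∑ i : Fin N, σ u i * σ v i) ^ 2 :=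
  stmt0_general N k σ hσ
end

section
/- Let F((p_σ)) = −∑_σ p_σ log p_σ + (β²/4) ∑_{σ,σ'} p_σ p_{σ'} (σ·σ')² on the probability simplex Λ_k over {-1,1}^k. If (p_σ) maximizes F over Λ_k, then p_σ = p_{−σ} for every σ ∈ {-1,1}^k. -/
open Finset Real

/-- The real sign of a Boolean spin: `true ↦ 1`, `false ↦ -1`. -/
noncomputable def sgn (b : Bool) : ℝ := if b then 1 else -1

/-- Standard inner product of two spin vectors in `{-1,1}^k`. -/
noncomputable def sdot {k : ℕ} (σ τ : Fin k → Bool) : ℝ := ∑ i, sgn (σ i) * sgn (τ i)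

/-- The functional `F((p_σ)) = −∑_σ p_σ log p_σ + (β²/4) ∑_{σ,σ'} p_σ p_{σ'} (σ·σ')²`.
(Note `Real.log 0 = 0`, so the convention `0 log 0 = 0` holds automatically.) -/
noncomputable def Ffun {k : ℕ} (β : ℝ) (p : (Fin k → Bool) → ℝ) : ℝ :=
  -∑ σ, p σ * Real.log (p σ) + β ^ 2 / 4 * ∑ σ, ∑ σ', p σ * p σ' * (sdot σ σ') ^ 2

lemma sgn_not (b : Bool) : sgn (!b) = - sgn b := by cases b <;> simp [sgn]

lemma sdot_flip_left {k : ℕ} (σ τ : Fin k → Bool) :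
    sdot (fun i => !(σ i)) τ = - sdot σ τ := by
  simp [sdot, sgn_not, ← Finset.sum_neg_distrib]

lemma sdot_flip_right {k : ℕ} (σ τ : Fin k → Bool) :
    sdot σ (fun i => !(τ i)) = - sdot σ τ := by
  simp [sdot, sgn_not, ← Finset.sum_neg_distrib, mul_comm]

lemma flip_bijective {k : ℕ} :
    Function.Bijective (fun (σ : Fin k → Bool) i => !(σ i)) := by
  have : Function.Involutive (fun (σ : Fin k → Bool) i => !(σ i)) := by
    intro σ; funext i; simp
  exact this.bijective

lemma sum_flip_inv {k : ℕ} (f : (Fin k → Bool) → ℝ) :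
    ∑ σ : Fin k → Bool, f (fun i => !(σ i)) = ∑ σ, f σ := by
  exact Fintype.sum_bijective (fun (σ : Fin k → Bool) i => !(σ i)) flip_bijective
    (fun σ => f (fun i => !(σ i))) f (fun _ => rfl)

theorem stmt5 (k : ℕ) (hk : 2 ≤ k) (β : ℝ) (hβ : 0 < β)
    (p : (Fin k → Bool) → ℝ) (hp : ∀ σ, 0 ≤ p σ) (hsum : ∑ σ, p σ = 1)
    (hmax : ∀ q : (Fin k → Bool) → ℝ,
      (∀ σ, 0 ≤ q σ) → (∑ σ, q σ = 1) → Ffun β q ≤ Ffun β p) :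
    ∀ σ : Fin k → Bool, p σ = p (fun i => !(σ i)) := by
  by_contra h
  push_neg at h
  obtain ⟨σ₀, hσ₀⟩ := h
  set fl : (Fin k → Bool) → (Fin k → Bool) := fun σ i => !(σ i) with hfl
  set q : (Fin k → Bool) → ℝ := fun σ => (p σ + p (fl σ)) / 2 with hq
  have hq0 : ∀ σ, 0 ≤ q σ := fun σ => by
    have := hp σ; have := hp (fl σ); simp only [hq]; linarith
  have hq1 : ∑ σ, q σ = 1 := by
    simp only [hq, hfl]
    rw [← Finset.sum_div, Finset.sum_add_distrib, sum_flip_inv p, hsum]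
    norm_num
  -- squared dot product invariance
  have hD : ∀ σ τ : Fin k → Bool, (sdot (fl σ) τ) ^ 2 = (sdot σ τ) ^ 2 := by
    intro σ τ; rw [sdot_flip_left]; ring
  have hD' : ∀ σ τ : Fin k → Bool, (sdot σ (fl τ)) ^ 2 = (sdot σ τ) ^ 2 := by
    intro σ τ; rw [sdot_flip_right]; ring
  -- the quadratic term is unchanged
  have flfl : ∀ τ, fl (fl τ) = τ := by intro τ; funext i; simp [hfl]
  have inner_eq : ∀ (g : (Fin k → Bool) → ℝ) (σ : Fin k → Bool),
      ∑ τ, g (fl τ) * (sdot σ τ) ^ 2 = ∑ τ, g τ * (sdot σ τ) ^ 2 := by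
    intro g σ
    calc ∑ τ, g (fl τ) * (sdot σ τ) ^ 2
        = ∑ τ, g (fl τ) * (sdot σ (fl (fl τ))) ^ 2 := by
          apply Finset.sum_congr rfl; intro τ _; rw [flfl]
      _ = ∑ τ, g τ * (sdot σ (fl τ)) ^ 2 :=
          sum_flip_inv (fun τ => g τ * (sdot σ (fl τ)) ^ 2)
      _ = ∑ τ, g τ * (sdot σ τ) ^ 2 := by
          apply Finset.sum_congr rfl; intro τ _; rw [hD']
  have outer_eq : ∀ (g h : (Fin k → Bool) → ℝ),
      ∑ σ, ∑ τ, g (fl σ) * h τ * (sdot σ τ) ^ 2 = ∑ σ, ∑ τ, g σ * h τ * (sdot σ τ) ^ 2 := by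
    intro g h
    calc ∑ σ, ∑ τ, g (fl σ) * h τ * (sdot σ τ) ^ 2
        = ∑ σ, ∑ τ, g (fl σ) * h τ * (sdot (fl (fl σ)) τ) ^ 2 := by
          apply Finset.sum_congr rfl; intro σ _
          apply Finset.sum_congr rfl; intro τ _; rw [flfl]
      _ = ∑ σ, ∑ τ, g σ * h τ * (sdot (fl σ) τ) ^ 2 :=
          sum_flip_inv (fun σ => ∑ τ, g σ * h τ * (sdot (fl σ) τ) ^ 2)
      _ = ∑ σ, ∑ τ, g σ * h τ * (sdot σ τ) ^ 2 := by
          apply Finset.sum_congr rfl; intro σ _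
          apply Finset.sum_congr rfl; intro τ _; rw [hD]
  have quad : ∑ σ, ∑ τ, q σ * q τ * (sdot σ τ) ^ 2
      = ∑ σ, ∑ τ, p σ * p τ * (sdot σ τ) ^ 2 := by
    have expand : ∀ σ τ : Fin k → Bool, q σ * q τ * (sdot σ τ) ^ 2 =
        (p σ * p τ * (sdot σ τ) ^ 2 + p σ * p (fl τ) * (sdot σ τ) ^ 2
          + p (fl σ) * p τ * (sdot σ τ) ^ 2 + p (fl σ) * p (fl τ) * (sdot σ τ) ^ 2) / 4 := by
      intro σ τ; simp only [hq]; ring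
    calc ∑ σ, ∑ τ, q σ * q τ * (sdot σ τ) ^ 2
        = (∑ σ, ∑ τ, p σ * p τ * (sdot σ τ) ^ 2
          + ∑ σ, ∑ τ, p σ * p (fl τ) * (sdot σ τ) ^ 2
          + ∑ σ, ∑ τ, p (fl σ) * p τ * (sdot σ τ) ^ 2
          + ∑ σ, ∑ τ, p (fl σ) * p (fl τ) * (sdot σ τ) ^ 2) / 4 := by
          simp only [expand, ← Finset.sum_div]
          congr 1
          simp only [Finset.sum_add_distrib]
      _ = ∑ σ, ∑ τ, p σ * p τ * (sdot σ τ) ^ 2 := by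
          have e2 : ∑ σ, ∑ τ, p σ * p (fl τ) * (sdot σ τ) ^ 2
              = ∑ σ, ∑ τ, p σ * p τ * (sdot σ τ) ^ 2 := by
            apply Finset.sum_congr rfl
            intro σ _
            have := inner_eq (fun τ => p σ * p τ) σ
            simpa [mul_assoc] using this
          have e3 : ∑ σ, ∑ τ, p (fl σ) * p τ * (sdot σ τ) ^ 2
              = ∑ σ, ∑ τ, p σ * p τ * (sdot σ τ) ^ 2 := outer_eq p p
          have e4 : ∑ σ, ∑ τ, p (fl σ) * p (fl τ) * (sdot σ τ) ^ 2
              = ∑ σ, ∑ τ, p σ * p (fl τ) * (sdot σ τ) ^ 2 := outer_eq p (fun τ => p (fl τ))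
          rw [e2, e3, e4, e2]; ring
  -- entropy strictly decreases
  have midpoint_le : ∀ σ : Fin k → Bool,
      q σ * Real.log (q σ) ≤ (p σ * Real.log (p σ) + p (fl σ) * Real.log (p (fl σ))) / 2 := by
    intro σ
    have hcvx := Real.convexOn_mul_log.2 (Set.mem_Ici.mpr (hp σ)) (Set.mem_Ici.mpr (hp (fl σ)))
      (by norm_num : (0:ℝ) ≤ 1/2) (by norm_num : (0:ℝ) ≤ 1/2) (by norm_num)
    simp only [smul_eq_mul] at hcvx
    have hqeq : q σ = 1/2 * p σ + 1/2 * p (fl σ) := by simp only [hq]; ring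
    rw [hqeq]
    calc (1/2 * p σ + 1/2 * p (fl σ)) * Real.log (1/2 * p σ + 1/2 * p (fl σ))
        ≤ 1/2 * (p σ * Real.log (p σ)) + 1/2 * (p (fl σ) * Real.log (p (fl σ))) := hcvx
      _ = (p σ * Real.log (p σ) + p (fl σ) * Real.log (p (fl σ))) / 2 := by ring
  have midpoint_lt :
      q σ₀ * Real.log (q σ₀) < (p σ₀ * Real.log (p σ₀) + p (fl σ₀) * Real.log (p (fl σ₀))) / 2 := by
    have hcvx := Real.strictConvexOn_mul_log.2 (Set.mem_Ici.mpr (hp σ₀))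
      (Set.mem_Ici.mpr (hp (fl σ₀))) hσ₀
      (by norm_num : (0:ℝ) < 1/2) (by norm_num : (0:ℝ) < 1/2) (by norm_num)
    simp only [smul_eq_mul] at hcvx
    have hqeq : q σ₀ = 1/2 * p σ₀ + 1/2 * p (fl σ₀) := by simp only [hq]; ring
    rw [hqeq]
    calc (1/2 * p σ₀ + 1/2 * p (fl σ₀)) * Real.log (1/2 * p σ₀ + 1/2 * p (fl σ₀))
        < 1/2 * (p σ₀ * Real.log (p σ₀)) + 1/2 * (p (fl σ₀) * Real.log (p (fl σ₀))) := hcvx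
      _ = (p σ₀ * Real.log (p σ₀) + p (fl σ₀) * Real.log (p (fl σ₀))) / 2 := by ring
  have hent : ∑ σ, q σ * Real.log (q σ) < ∑ σ, p σ * Real.log (p σ) := by
    have hlt : ∑ σ, q σ * Real.log (q σ)
        < ∑ σ, (p σ * Real.log (p σ) + p (fl σ) * Real.log (p (fl σ))) / 2 :=
      Finset.sum_lt_sum (fun σ _ => midpoint_le σ) ⟨σ₀, Finset.mem_univ σ₀, midpoint_lt⟩
    have : ∑ σ, (p σ * Real.log (p σ) + p (fl σ) * Real.log (p (fl σ))) / 2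
        = ∑ σ, p σ * Real.log (p σ) := by
      simp only [hfl]
      rw [← Finset.sum_div, Finset.sum_add_distrib,
        sum_flip_inv (fun σ => p σ * Real.log (p σ))]
      ring
    linarith
  have : Ffun β p < Ffun β q := by
    unfold Ffun
    rw [quad]
    linarith
  exact absurd (hmax q hq0 hq1) (not_le.mpr this)
end

section
/- For two i.i.d. random vectors V, V' in {-1,1}^k with common distribution L, one has E[(V·V')²] ≤ k², with equality if and only if there exists σ₀ ∈ {-1,1}^k with L(σ₀) + L(−σ₀) = 1. -/
open Finset Real

lemma sgn_mul_cases (a b : Bool) : sgn a * sgn b = 1 ∨ sgn a * sgn b = -1 := by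
  cases a <;> cases b <;> simp [sgn]

lemma sgn_mul_eq_one (a b : Bool) (h : sgn a * sgn b = 1) : b = a := by
  cases a <;> cases b <;> simp_all [sgn] <;> linarith

lemma sgn_mul_eq_neg_one (a b : Bool) (h : sgn a * sgn b = -1) : b = !a := by
  cases a <;> cases b <;> simp_all [sgn] <;> linarith

lemma sdot_self {k : ℕ} (σ : Fin k → Bool) : sdot σ σ = k := by
  have : ∀ a : Bool, sgn a * sgn a = 1 := by intro a; cases a <;> simp [sgn]
  simp [sdot, this]

lemma sdot_not_right {k : ℕ} (σ : Fin k → Bool) : sdot σ (fun i => !(σ i)) = -k := by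
  have : ∀ a : Bool, sgn a * sgn (!a) = -1 := by intro a; cases a <;> simp [sgn]
  simp [sdot, this]

lemma sdot_not_left {k : ℕ} (σ : Fin k → Bool) : sdot (fun i => !(σ i)) σ = -k := by
  have : ∀ a : Bool, sgn (!a) * sgn a = -1 := by intro a; cases a <;> simp [sgn]
  simp [sdot, this]

lemma sdot_sq_le {k : ℕ} (σ τ : Fin k → Bool) : (sdot σ τ) ^ 2 ≤ (k : ℝ) ^ 2 := by
  have h1 : |sdot σ τ| ≤ (k : ℝ) := by
    calc |sdot σ τ| ≤ ∑ i, |sgn (σ i) * sgn (τ i)| := Finset.abs_sum_le_sum_abs _ _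
    _ = (k : ℝ) := by
        have : ∀ i, |sgn (σ i) * sgn (τ i)| = 1 := by
          intro i
          rcases sgn_mul_cases (σ i) (τ i) with h | h <;> rw [h] <;> norm_num
        simp [this]
  have := abs_le.mp h1
  nlinarith [this.1, this.2]

lemma sdot_sq_eq {k : ℕ} (σ τ : Fin k → Bool)
    (h : (sdot σ τ) ^ 2 = (k : ℝ) ^ 2) : τ = σ ∨ τ = fun i => !(σ i) := by
  have h2 : (sdot σ τ - k) * (sdot σ τ + k) = 0 := by nlinarith
  have hsdot : sdot σ τ = ∑ i, sgn (σ i) * sgn (τ i) := rfl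
  rcases mul_eq_zero.mp h2 with h' | h'
  · left
    have hsum0 : ∑ i : Fin k, ((1 : ℝ) - sgn (σ i) * sgn (τ i)) = 0 := by
      rw [Finset.sum_sub_distrib, ← hsdot]
      simp only [Finset.sum_const, Finset.card_univ, Fintype.card_fin, nsmul_eq_mul, mul_one]
      linarith
    have hz := (Finset.sum_eq_zero_iff_of_nonneg (fun i _ => by
      rcases sgn_mul_cases (σ i) (τ i) with hh | hh <;> rw [hh] <;> norm_num)).mp hsum0
    funext i
    have := hz i (Finset.mem_univ i)
    exact sgn_mul_eq_one _ _ (by linarith)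
  · right
    have hsum0 : ∑ i : Fin k, ((1 : ℝ) + sgn (σ i) * sgn (τ i)) = 0 := by
      rw [Finset.sum_add_distrib, ← hsdot]
      simp only [Finset.sum_const, Finset.card_univ, Fintype.card_fin, nsmul_eq_mul, mul_one]
      linarith
    have hz := (Finset.sum_eq_zero_iff_of_nonneg (fun i _ => by
      rcases sgn_mul_cases (σ i) (τ i) with hh | hh <;> rw [hh] <;> norm_num)).mp hsum0
    funext i
    have := hz i (Finset.mem_univ i)
    exact sgn_mul_eq_neg_one _ _ (by linarith)

theorem stmt7 (k : ℕ) (hk : 1 ≤ k)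
    (L : (Fin k → Bool) → ℝ) (hL : ∀ σ, 0 ≤ L σ) (hsum : ∑ σ, L σ = 1) :
    (∑ σ, ∑ σ', L σ * L σ' * (sdot σ σ') ^ 2 ≤ (k : ℝ) ^ 2) ∧
      (∑ σ, ∑ σ', L σ * L σ' * (sdot σ σ') ^ 2 = (k : ℝ) ^ 2 ↔
        ∃ σ₀ : Fin k → Bool, L σ₀ + L (fun i => !(σ₀ i)) = 1) := by
  set S := ∑ σ, ∑ σ', L σ * L σ' * (sdot σ σ') ^ 2 with hSdef
  have hconst : ∑ σ : Fin k → Bool, ∑ σ' : Fin k → Bool, L σ * L σ' * (k : ℝ) ^ 2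
      = (k : ℝ) ^ 2 := by
    have : ∀ σ : Fin k → Bool, ∑ σ' : Fin k → Bool, L σ * L σ' * (k : ℝ) ^ 2
        = L σ * (k : ℝ) ^ 2 := by
      intro σ
      rw [← Finset.sum_mul, ← Finset.mul_sum, hsum, mul_one]
    simp_rw [this]
    rw [← Finset.sum_mul, hsum, one_mul]
  have key : ∑ σ, ∑ σ', L σ * L σ' * ((k : ℝ) ^ 2 - (sdot σ σ') ^ 2) = (k : ℝ) ^ 2 - S := by
    have hexp : ∀ σ σ' : Fin k → Bool, L σ * L σ' * ((k : ℝ) ^ 2 - (sdot σ σ') ^ 2)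
        = L σ * L σ' * (k : ℝ) ^ 2 - L σ * L σ' * (sdot σ σ') ^ 2 := fun σ σ' => by ring
    simp_rw [hexp, Finset.sum_sub_distrib]
    rw [hconst]
  have hterm : ∀ σ σ' : Fin k → Bool, 0 ≤ L σ * L σ' * ((k : ℝ) ^ 2 - (sdot σ σ') ^ 2) := by
    intro σ σ'
    have := sdot_sq_le σ σ'
    exact mul_nonneg (mul_nonneg (hL σ) (hL σ')) (by linarith)
  have hnn : 0 ≤ ∑ σ, ∑ σ' : Fin k → Bool, L σ * L σ' * ((k : ℝ) ^ 2 - (sdot σ σ') ^ 2) :=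
    Finset.sum_nonneg fun σ _ => Finset.sum_nonneg fun σ' _ => hterm σ σ'
  have hle : S ≤ (k : ℝ) ^ 2 := by linarith [key ▸ hnn]
  refine ⟨hle, ?_, ?_⟩
  · -- forward
    intro hEq
    have hzero : ∑ σ, ∑ σ' : Fin k → Bool, L σ * L σ' * ((k : ℝ) ^ 2 - (sdot σ σ') ^ 2) = 0 := by
      rw [key, hEq]; ring
    have hz1 := (Finset.sum_eq_zero_iff_of_nonneg (fun σ _ =>
      Finset.sum_nonneg fun σ' _ => hterm σ σ')).mp hzero
    have hz : ∀ σ σ' : Fin k → Bool, L σ * L σ' * ((k : ℝ) ^ 2 - (sdot σ σ') ^ 2) = 0 := by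
      intro σ σ'
      exact (Finset.sum_eq_zero_iff_of_nonneg (fun σ' _ => hterm σ σ')).mp
        (hz1 σ (Finset.mem_univ σ)) σ' (Finset.mem_univ σ')
    obtain ⟨σ₀, hpos⟩ : ∃ σ₀, 0 < L σ₀ := by
      by_contra hc
      push_neg at hc
      have : ∑ σ, L σ = 0 := Finset.sum_eq_zero fun σ _ => le_antisymm (hc σ) (hL σ)
      rw [hsum] at this; norm_num at this
    refine ⟨σ₀, ?_⟩
    have hrest : ∀ σ', σ' ≠ σ₀ → σ' ≠ (fun i => !(σ₀ i)) → L σ' = 0 := by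
      intro σ' h1 h2
      by_contra hne0
      have hp : 0 < L σ' := lt_of_le_of_ne (hL σ') (Ne.symm hne0)
      have ht := hz σ₀ σ'
      have hd : (sdot σ₀ σ') ^ 2 = (k : ℝ) ^ 2 := by
        rcases mul_eq_zero.mp ht with h | h
        · rcases mul_eq_zero.mp h with h | h
          · exact absurd h (ne_of_gt hpos)
          · exact absurd h (ne_of_gt hp)
        · linarith
      rcases sdot_sq_eq _ _ hd with h | h
      · exact h1 h
      · exact h2 h
    have hne : σ₀ ≠ fun i => !(σ₀ i) := by
      intro h
      have := congrFun h ⟨0, hk⟩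
      simp at this
    have hpair : ∑ σ, L σ = L σ₀ + L (fun i => !(σ₀ i)) := by
      rw [← Finset.sum_pair hne]
      refine (Finset.sum_subset (Finset.subset_univ _) ?_).symm
      intro x _ hx
      simp only [Finset.mem_insert, Finset.mem_singleton, not_or] at hx
      exact hrest x hx.1 hx.2
    rw [hsum] at hpair
    exact hpair.symm
  · -- backward
    rintro ⟨σ₀, hσ₀⟩
    have hne : σ₀ ≠ fun i => !(σ₀ i) := by
      intro h
      have := congrFun h ⟨0, hk⟩
      simp at this
    have hrest : ∀ σ, σ ≠ σ₀ → σ ≠ (fun i => !(σ₀ i)) → L σ = 0 := by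
      intro σ h1 h2
      have hsub : ({σ₀, fun i => !(σ₀ i)} : Finset (Fin k → Bool)) ⊆ Finset.univ :=
        Finset.subset_univ _
      have hdiff : ∑ x ∈ Finset.univ \ ({σ₀, fun i => !(σ₀ i)} : Finset (Fin k → Bool)), L x
          = 0 := by
        have := Finset.sum_sdiff (f := L) hsub
        rw [hsum, Finset.sum_pair hne, hσ₀] at this
        linarith
      have hmem : σ ∈ Finset.univ \ ({σ₀, fun i => !(σ₀ i)} : Finset (Fin k → Bool)) := by
        simp [h1, h2]
      exact (Finset.sum_eq_zero_iff_of_nonneg (fun x _ => hL x)).mp hdiff σ hmem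
    have hall : ∀ σ σ' : Fin k → Bool,
        L σ * L σ' * (sdot σ σ') ^ 2 = L σ * L σ' * (k : ℝ) ^ 2 := by
      intro σ σ'
      rcases eq_or_ne (L σ) 0 with h0 | h0
      · simp [h0]
      rcases eq_or_ne (L σ') 0 with h1 | h1
      · simp [h1]
      have hσ : σ = σ₀ ∨ σ = fun i => !(σ₀ i) := by
        by_contra hc
        push_neg at hc
        exact h0 (hrest σ hc.1 hc.2)
      have hσ' : σ' = σ₀ ∨ σ' = fun i => !(σ₀ i) := by
        by_contra hc
        push_neg at hc
        exact h1 (hrest σ' hc.1 hc.2)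
      rcases hσ with rfl | rfl <;> rcases hσ' with rfl | rfl <;>
        simp only [sdot_self, sdot_not_right, sdot_not_left, neg_sq]
    rw [hSdef]
    simp_rw [hall]
    exact hconst
end

section
/- For all σ₀, σ₁ ∈ {-1,1}^k with k ≥ 2 and all q ∈ ℝ: ∑_{σ ∈ {-1,1}^k} (σ·σ₀)² e^{q(σ·σ₁)²} = ((H'(q) − kH(q))/(k²−k)) (σ₀·σ₁)² + (k²H(q) − H'(q))/(k−1), where H(q) = ∑_σ e^{q(σ·σ₁)²} and H'(q) = ∑_σ (σ·σ₁)² e^{q(σ·σ₁)²}. -/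
open Finset Real

lemma sgn_sq (b : Bool) : sgn b * sgn b = 1 := by cases b <;> simp [sgn]

lemma sgn_beq (a b : Bool) : sgn (a == b) = sgn a * sgn b := by
  cases a <;> cases b <;> simp [sgn]

/-- flipping by σ₁ is an involutive bijection of spin space -/
noncomputable def flipEquiv {k : ℕ} (σ₁ : Fin k → Bool) :
    Equiv.Perm (Fin k → Bool) :=
  Function.Involutive.toPerm (fun σ i => σ i == σ₁ i)
    (by intro σ; funext i; simp only []; cases h0 : σ i <;> cases h1 : σ₁ i <;> simp [h0, h1])

lemma flipEquiv_apply {k : ℕ} (σ₁ σ : Fin k → Bool) (i : Fin k) :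
    (flipEquiv σ₁) σ i = (σ i == σ₁ i) := rfl

theorem stmt15 (k : ℕ) (hk : 2 ≤ k) (σ₀ σ₁ : Fin k → Bool) (q : ℝ)
    (H H' : ℝ → ℝ)
    (hH : ∀ q, H q = ∑ σ : Fin k → Bool, Real.exp (q * (sdot σ σ₁) ^ 2))
    (hH' : ∀ q, H' q = ∑ σ : Fin k → Bool, (sdot σ σ₁) ^ 2 * Real.exp (q * (sdot σ σ₁) ^ 2)) :
    ∑ σ : Fin k → Bool, (sdot σ σ₀) ^ 2 * Real.exp (q * (sdot σ σ₁) ^ 2) =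
      (H' q - k * H q) / ((k : ℝ) ^ 2 - k) * (sdot σ₀ σ₁) ^ 2 +
        ((k : ℝ) ^ 2 * H q - H' q) / ((k : ℝ) - 1) := by
  set S : (Fin k → Bool) → ℝ := fun τ => ∑ l, sgn (τ l) with hS
  set F : (Fin k → Bool) → ℝ := fun τ => Real.exp (q * (S τ) ^ 2) with hF
  set ε : Fin k → ℝ := fun i => sgn (σ₀ i) * sgn (σ₁ i) with hε
  -- the two key reindexing identities for sdot under the flip
  have hsdot1 : ∀ τ : Fin k → Bool, sdot ((flipEquiv σ₁) τ) σ₁ = S τ := by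
    intro τ
    simp only [sdot, flipEquiv_apply, sgn_beq, hS]
    apply Finset.sum_congr rfl
    intro i _
    rw [mul_assoc, sgn_sq, mul_one]
  have hsdot0 : ∀ τ : Fin k → Bool, sdot ((flipEquiv σ₁) τ) σ₀ = ∑ i, ε i * sgn (τ i) := by
    intro τ
    simp only [sdot, flipEquiv_apply, sgn_beq, hε]
    apply Finset.sum_congr rfl
    intro i _
    ring
  -- H and H' as sums over τ
  have hHq : H q = ∑ τ : Fin k → Bool, F τ := by
    rw [hH, ← Equiv.sum_comp (flipEquiv σ₁)
      (fun σ => Real.exp (q * (sdot σ σ₁) ^ 2))]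
    apply Finset.sum_congr rfl
    intro τ _
    rw [hsdot1]
  have hH'q : H' q = ∑ τ : Fin k → Bool, (S τ) ^ 2 * F τ := by
    rw [hH', ← Equiv.sum_comp (flipEquiv σ₁)
      (fun σ => (sdot σ σ₁) ^ 2 * Real.exp (q * (sdot σ σ₁) ^ 2))]
    apply Finset.sum_congr rfl
    intro τ _
    rw [hsdot1]
  have hLHS : (∑ σ : Fin k → Bool, (sdot σ σ₀) ^ 2 * Real.exp (q * (sdot σ σ₁) ^ 2))
      = ∑ τ : Fin k → Bool, (∑ i, ε i * sgn (τ i)) ^ 2 * F τ := by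
    rw [← Equiv.sum_comp (flipEquiv σ₁)
      (fun σ => (sdot σ σ₀) ^ 2 * Real.exp (q * (sdot σ σ₁) ^ 2))]
    apply Finset.sum_congr rfl
    intro τ _
    rw [hsdot1, hsdot0]
  -- correlation coefficients
  set c : Fin k → Fin k → ℝ := fun i j => ∑ τ : Fin k → Bool, sgn (τ i) * sgn (τ j) * F τ
    with hc
  -- F is permutation invariant and hence c is symmetric under permutations
  have hFperm : ∀ (pp : Equiv.Perm (Fin k)) (τ : Fin k → Bool), F (fun x => τ (pp x)) = F τ := by
    intro pp τ
    simp only [hF, hS]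
    rw [Equiv.sum_comp pp (fun l => sgn (τ l))]
  have hcperm : ∀ (pp : Equiv.Perm (Fin k)) (i j : Fin k), c (pp i) (pp j) = c i j := by
    intro pp i j
    simp only [hc]
    rw [← Equiv.sum_comp (Equiv.arrowCongr pp.symm (Equiv.refl Bool))
      (fun τ : Fin k → Bool => sgn (τ i) * sgn (τ j) * F τ)]
    apply Finset.sum_congr rfl
    intro τ _
    have harr : ((Equiv.arrowCongr pp.symm (Equiv.refl Bool)) τ) = fun x => τ (pp x) := by
      funext x; simp [Equiv.arrowCongr]
    rw [harr, hFperm pp τ]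
  -- fixed pair of distinct indices
  have h0 : (0 : ℕ) < k := by omega
  have h1 : (1 : ℕ) < k := by omega
  set i0 : Fin k := ⟨0, h0⟩
  set i1 : Fin k := ⟨1, h1⟩
  have hne01 : i0 ≠ i1 := by simp [i0, i1, Fin.ext_iff]
  set B : ℝ := c i0 i1 with hB
  set Hs : ℝ := ∑ τ : Fin k → Bool, F τ with hHs
  have hcdiag : ∀ i, c i i = Hs := by
    intro i
    simp only [hc, hHs]
    apply Finset.sum_congr rfl
    intro τ _
    rw [sgn_sq, one_mul]
  have hcoff : ∀ i j, i ≠ j → c i j = B := by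
    intro i j hij
    set j₁ : Fin k := (Equiv.swap i i0) i1 with hj₁
    have hj₁i : j₁ ≠ i := by
      intro h
      have : (Equiv.swap i i0) i1 = (Equiv.swap i i0) i0 := by
        rw [Equiv.swap_apply_right]; exact h
      exact hne01 ((Equiv.swap i i0).injective this).symm
    set pp : Equiv.Perm (Fin k) := (Equiv.swap i i0).trans (Equiv.swap j j₁) with hpp
    have hpp0 : pp i0 = i := by
      simp only [hpp, Equiv.trans_apply, Equiv.swap_apply_right]
      exact Equiv.swap_apply_of_ne_of_ne hij (Ne.symm hj₁i)
    have hpp1 : pp i1 = j := by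
      simp only [hpp, Equiv.trans_apply, ← hj₁]
      exact Equiv.swap_apply_right j j₁
    have := hcperm pp i0 i1
    rw [hpp0, hpp1] at this
    rw [this, hB]
  have hcite : ∀ i j, c i j = B + (if i = j then Hs - B else 0) := by
    intro i j
    by_cases h : i = j
    · subst h; rw [hcdiag, if_pos rfl]; ring
    · rw [hcoff i j h, if_neg h]; ring
  -- expansion lemma
  have expand : ∀ a : Fin k → ℝ,
      (∑ τ : Fin k → Bool, (∑ i, a i * sgn (τ i)) ^ 2 * F τ)
        = (∑ i, a i) ^ 2 * B + (∑ i, a i ^ 2) * (Hs - B) := by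
    intro a
    have step1 : ∀ τ : Fin k → Bool, (∑ i, a i * sgn (τ i)) ^ 2 * F τ
        = ∑ i, ∑ j, a i * a j * (sgn (τ i) * sgn (τ j) * F τ) := by
      intro τ
      rw [sq, Finset.sum_mul_sum, Finset.sum_mul]
      apply Finset.sum_congr rfl
      intro i _
      rw [Finset.sum_mul]
      apply Finset.sum_congr rfl
      intro j _
      ring
    calc (∑ τ : Fin k → Bool, (∑ i, a i * sgn (τ i)) ^ 2 * F τ)
        = ∑ τ : Fin k → Bool, ∑ i, ∑ j, a i * a j * (sgn (τ i) * sgn (τ j) * F τ) :=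
          Finset.sum_congr rfl (fun τ _ => step1 τ)
      _ = ∑ i, ∑ τ : Fin k → Bool, ∑ j, a i * a j * (sgn (τ i) * sgn (τ j) * F τ) :=
          Finset.sum_comm
      _ = ∑ i, ∑ j, ∑ τ : Fin k → Bool, a i * a j * (sgn (τ i) * sgn (τ j) * F τ) :=
          Finset.sum_congr rfl (fun i _ => Finset.sum_comm)
      _ = ∑ i, ∑ j, a i * a j * c i j := by
          apply Finset.sum_congr rfl; intro i _
          apply Finset.sum_congr rfl; intro j _
          rw [hc, ← Finset.mul_sum]
      _ = ∑ i, ∑ j, (a i * a j * B + (if i = j then a i * a j * (Hs - B) else 0)) := by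
          apply Finset.sum_congr rfl; intro i _
          apply Finset.sum_congr rfl; intro j _
          rw [hcite i j]
          split_ifs with h <;> ring
      _ = (∑ i, a i) ^ 2 * B + (∑ i, a i ^ 2) * (Hs - B) := by
          rw [Finset.sum_congr rfl (fun i (_ : i ∈ Finset.univ) => Finset.sum_add_distrib)]
          rw [Finset.sum_add_distrib]
          congr 1
          · rw [sq, Finset.sum_mul_sum, Finset.sum_mul]
            exact Finset.sum_congr rfl fun i _ => (Finset.sum_mul _ _ _).symm
          · rw [Finset.sum_mul]
            apply Finset.sum_congr rfl; intro i _
            rw [Finset.sum_ite_eq Finset.univ i (fun j => a i * a j * (Hs - B))]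
            simp only [Finset.mem_univ, if_true, sq]
            try ring
    -- end expand
  have hεsq : (∑ i : Fin k, (ε i) ^ 2) = (k : ℝ) := by
    have : ∀ i : Fin k, (ε i) ^ 2 = 1 := by
      intro i
      simp only [hε]
      cases σ₀ i <;> cases σ₁ i <;> norm_num [sgn]
    rw [Finset.sum_congr rfl (fun i _ => this i)]
    simp
  have hE : sdot σ₀ σ₁ = ∑ i, ε i := rfl
  -- put it together
  have hLHS2 : (∑ σ : Fin k → Bool, (sdot σ σ₀) ^ 2 * Real.exp (q * (sdot σ σ₁) ^ 2))
      = (∑ i, ε i) ^ 2 * B + (k : ℝ) * (Hs - B) := by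
    rw [hLHS, expand ε, hεsq]
  have hH'2 : H' q = (k : ℝ) ^ 2 * B + (k : ℝ) * (Hs - B) := by
    rw [hH'q]
    have : ∀ τ : Fin k → Bool, (S τ) ^ 2 * F τ = (∑ i, (1 : ℝ) * sgn (τ i)) ^ 2 * F τ := by
      intro τ; simp [hS]
    rw [Finset.sum_congr rfl (fun τ _ => this τ), expand (fun _ => 1)]
    simp [sq]
  have hkR : (2 : ℝ) ≤ (k : ℝ) := by exact_mod_cast hk
  have hk1 : (k : ℝ) - 1 ≠ 0 := by nlinarith
  have hk2 : (k : ℝ) ^ 2 - k ≠ 0 := by nlinarith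
  rw [hLHS2, hH'2, hHq, hE]
  field_simp
  ring
end
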